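/- If f : ℝ^d → ℝ^d is Lipschitz with constant μ > 0, then for any x₁,…,x_N ∈ ℝ^d, (1/(2N)) Σ_{i=1}^N Σ_{k=1}^N ‖f(x_i) − f(x_k)‖² ≤ μ² Σ_{i=2}^N ‖x̃_i‖², where x̃_i is the i-th d-block of (U^T ⊗ I_d) x for any orthogonal U with first column 1_N/√N and x the stacked vector of the x_i. -/

import Mathlib

open Matrix Kronecker

/-- If f is Lipschitz with constant μ > 0, then for any x₁,…,x_N,
(1/(2N)) Σᵢ Σₖ ‖f(xᵢ) − f(xₖ)‖² ≤ μ² Σ_{i=2}^N ‖x̃ᵢ‖², where x̃ᵢ is the i-th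
d-block of (Uᵀ ⊗ I_d)x for an orthogonal U with first column 1_N/√N.
(Vertex set of size N+1.) -/
theorem lipschitz_disagreement_bound {N d : ℕ}
    (μ : ℝ) (hμ : 0 < μ) (f : (Fin d → ℝ) → (Fin d → ℝ))
    (hf : ∀ u v : Fin d → ℝ,
      Real.sqrt (∑ j, (f u j - f v j) ^ 2) ≤ μ * Real.sqrt (∑ j, (u j - v j) ^ 2))
    (U : Matrix (Fin (N + 1)) (Fin (N + 1)) ℝ)
    (hU : U * Uᵀ = 1) (hU' : Uᵀ * U = 1)
    (hcol : ∀ i, U i 0 = 1 / Real.sqrt (N + 1))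
    (x : Fin (N + 1) → Fin d → ℝ)
    (xs : Fin (N + 1) × Fin d → ℝ) (hxs : ∀ i j, xs (i, j) = x i j)
    (xt : Fin (N + 1) × Fin d → ℝ)
    (hxt : xt = (Uᵀ ⊗ₖ (1 : Matrix (Fin d) (Fin d) ℝ)) *ᵥ xs) :
    (1 / (2 * ((N : ℝ) + 1))) *
        ∑ i : Fin (N + 1), ∑ k : Fin (N + 1), ∑ j, (f (x i) j - f (x k) j) ^ 2
      ≤ μ ^ 2 * ∑ i : Fin N, ∑ j, (xt (i.succ, j)) ^ 2 := by
  have hN : ((N : ℝ) + 1) ≠ 0 := by positivity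
  have hsqrt : Real.sqrt ((N : ℝ) + 1) ≠ 0 := by positivity
  -- Step 1: pointwise squared Lipschitz bound
  have key : ∀ u v : Fin d → ℝ,
      (∑ j, (f u j - f v j) ^ 2) ≤ μ ^ 2 * ∑ j, (u j - v j) ^ 2 := by
    intro u v
    have ha : 0 ≤ ∑ j, (f u j - f v j) ^ 2 := Finset.sum_nonneg fun _ _ => sq_nonneg _
    have hb : 0 ≤ ∑ j, (u j - v j) ^ 2 := Finset.sum_nonneg fun _ _ => sq_nonneg _
    calc ∑ j, (f u j - f v j) ^ 2
        = (Real.sqrt (∑ j, (f u j - f v j) ^ 2)) ^ 2 := (Real.sq_sqrt ha).symm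
      _ ≤ (μ * Real.sqrt (∑ j, (u j - v j) ^ 2)) ^ 2 :=
          pow_le_pow_left₀ (Real.sqrt_nonneg _) (hf u v) 2
      _ = μ ^ 2 * ∑ j, (u j - v j) ^ 2 := by rw [mul_pow, Real.sq_sqrt hb]
  -- xt in explicit form
  have hxt' : ∀ (p : Fin (N + 1)) (j : Fin d), xt (p, j) = ∑ k, U k p * x k j := by
    intro p j
    rw [hxt]
    simp only [Matrix.mulVec, dotProduct, Fintype.sum_prod_type,
      Matrix.kroneckerMap_apply, Matrix.one_apply, Matrix.transpose_apply]
    congr 1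
    ext k
    rw [Finset.sum_eq_single j]
    · simp [hxs]
    · intro l _ hl; simp [hl.symm, Ne.symm hl]
    · simp
  -- per-coordinate identity
  have perj : ∀ j : Fin d,
      (1 / (2 * ((N : ℝ) + 1))) * ∑ i : Fin (N + 1), ∑ k : Fin (N + 1), (x i j - x k j) ^ 2
        = ∑ i : Fin N, (xt (i.succ, j)) ^ 2 := by
    intro j
    set v : Fin (N + 1) → ℝ := fun i => x i j with hv
    set S : ℝ := ∑ i, v i with hS
    set T : ℝ := ∑ i, (v i) ^ 2 with hT
    -- orthogonality: sum of squares of transformed equals T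
    have horth : ∑ i : Fin (N + 1), (xt (i, j)) ^ 2 = T := by
      have hw : ∀ i, xt (i, j) = (Uᵀ *ᵥ v) i := by
        intro i
        rw [hxt']
        simp [Matrix.mulVec, dotProduct, Matrix.transpose_apply, hv]
      simp_rw [hw]
      have : ∑ i, ((Uᵀ *ᵥ v) i) ^ 2 = (Uᵀ *ᵥ v) ⬝ᵥ (Uᵀ *ᵥ v) := by
        simp [dotProduct, sq]
      rw [this, Matrix.dotProduct_mulVec, Matrix.vecMul_transpose,
        Matrix.mulVec_mulVec, hU, Matrix.one_mulVec]
      simp [dotProduct, sq, hT]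
    have h0 : xt (0, j) ^ 2 = S ^ 2 / ((N : ℝ) + 1) := by
      rw [hxt']
      have : ∑ k, U k 0 * x k j = S / Real.sqrt ((N : ℝ) + 1) := by
        simp_rw [hcol]
        rw [hS, Finset.sum_div]
        refine Finset.sum_congr rfl fun k _ => ?_
        rw [hv]; ring
      rw [this, div_pow, Real.sq_sqrt (by positivity)]
    have hsplit : ∑ i : Fin N, (xt (i.succ, j)) ^ 2
        = (∑ i : Fin (N + 1), (xt (i, j)) ^ 2) - xt (0, j) ^ 2 := by
      rw [Fin.sum_univ_succ]; ring
    have expand : ∑ i : Fin (N + 1), ∑ k : Fin (N + 1), (v i - v k) ^ 2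
        = 2 * ((N : ℝ) + 1) * T - 2 * S ^ 2 := by
      have hrow : ∀ i, ∑ k, (v i - v k) ^ 2
          = ((N : ℝ) + 1) * (v i) ^ 2 - 2 * v i * S + T := by
        intro i
        have he : ∀ k, (v i - v k) ^ 2 = (v i) ^ 2 - 2 * v i * v k + (v k) ^ 2 :=
          fun k => by ring
        simp_rw [he]
        rw [Finset.sum_add_distrib, Finset.sum_sub_distrib, Finset.sum_const,
          Finset.card_univ, Fintype.card_fin, nsmul_eq_mul, ← Finset.mul_sum, ← hS, ← hT]
        push_cast; ring
      simp_rw [hrow]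
      rw [Finset.sum_add_distrib, Finset.sum_sub_distrib, Finset.sum_const,
        Finset.card_univ, Fintype.card_fin, nsmul_eq_mul, ← Finset.mul_sum,
        ← Finset.sum_mul, ← Finset.mul_sum, ← hS, ← hT]
      push_cast; ring
    have : ∑ i : Fin (N + 1), ∑ k : Fin (N + 1), (x i j - x k j) ^ 2
        = 2 * ((N : ℝ) + 1) * T - 2 * S ^ 2 := expand
    rw [this, hsplit, horth, h0]
    field_simp
  -- assemble
  have hswap : ∀ (g : Fin (N+1) → Fin (N+1) → Fin d → ℝ),
      ∑ i : Fin (N + 1), ∑ k : Fin (N + 1), ∑ j, g i k j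
        = ∑ j, ∑ i : Fin (N + 1), ∑ k : Fin (N + 1), g i k j := by
    intro g
    calc ∑ i : Fin (N + 1), ∑ k : Fin (N + 1), ∑ j, g i k j
        = ∑ i : Fin (N + 1), ∑ j, ∑ k : Fin (N + 1), g i k j :=
          Finset.sum_congr rfl fun i _ => Finset.sum_comm
      _ = ∑ j, ∑ i : Fin (N + 1), ∑ k : Fin (N + 1), g i k j := Finset.sum_comm
  have hRHS : ∑ i : Fin N, ∑ j, (xt (i.succ, j)) ^ 2
      = (1 / (2 * ((N : ℝ) + 1))) *
        ∑ i : Fin (N + 1), ∑ k : Fin (N + 1), ∑ j, (x i j - x k j) ^ 2 := by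
    rw [Finset.sum_comm]
    simp_rw [← perj]
    rw [← Finset.mul_sum, hswap (fun i k j => (x i j - x k j) ^ 2)]
  rw [hRHS]
  have hA : ∑ i : Fin (N + 1), ∑ k : Fin (N + 1), ∑ j, (f (x i) j - f (x k) j) ^ 2
      ≤ μ ^ 2 * ∑ i : Fin (N + 1), ∑ k : Fin (N + 1), ∑ j, (x i j - x k j) ^ 2 := by
    rw [Finset.mul_sum]
    refine Finset.sum_le_sum fun i _ => ?_
    rw [Finset.mul_sum]
    exact Finset.sum_le_sum fun k _ => key (x i) (x k)
  calc (1 / (2 * ((N : ℝ) + 1))) *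
        ∑ i : Fin (N + 1), ∑ k : Fin (N + 1), ∑ j, (f (x i) j - f (x k) j) ^ 2
      ≤ (1 / (2 * ((N : ℝ) + 1))) *
        (μ ^ 2 * ∑ i : Fin (N + 1), ∑ k : Fin (N + 1), ∑ j, (x i j - x k j) ^ 2) :=
        mul_le_mul_of_nonneg_left hA (by positivity)
    _ = μ ^ 2 * ((1 / (2 * ((N : ℝ) + 1))) *
        ∑ i : Fin (N + 1), ∑ k : Fin (N + 1), ∑ j, (x i j - x k j) ^ 2) := by ring
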